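/- Let R > 0 be a real number, m ≥ 2 a natural number, and set a = 2^m·P_R(m), b = 2^m, c = −(R(R+1)·2^{m−1}·P_R(m) − R²·2^{m−2}·P_R(m−2)), d = (−1)^m·R^m. If b + c + d ≠ 0, then for every natural number n, ∑_{k=0}^{n} P_R(km) = (a − b·P_R(m(n+1)) + d·P_R(mn)) / (b + c + d). -/

import Mathlib

/-!
Write `λ, μ` for the roots of `x² − R x − R/2`, so that `P_R(n) = C (λⁿ − μⁿ)`. Then
`x_k = P_R(km) = C (Lᵏ − Mᵏ)` with `L = λᵐ`, `M = μᵐ` satisfies the recurrence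
`x_{k+2} = (L + M) x_{k+1} − L M x_k`, and for such a sequence telescoping gives
`(∑_{k ≤ n} x_k)(1 − (L + M) + L M) = x_1 − x_{n+1} + L M x_n`.
The constants of the theorem are this identity scaled by `2ᵐ`: `a = 2ᵐ x_1`, `d = 2ᵐ (λμ)ᵐ`
since `λμ = −R/2`, and `c = −2ᵐ (λᵐ + μᵐ)` by a Lucas-type identity expressing `λᵐ + μᵐ`
through `P_R(m)` and `P_R(m − 2)`.
-/

/-- Generalized Pell numbers `P_R(n) = (2/(R·W))·(λⁿ − μⁿ)` with `W = √(R²+2R)`,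
`λ = (R+W)/2`, `μ = (R−W)/2`. -/
noncomputable def PR (R : ℝ) (n : ℕ) : ℝ :=
  (2 / (R * Real.sqrt (R ^ 2 + 2 * R))) *
    (((R + Real.sqrt (R ^ 2 + 2 * R)) / 2) ^ n - ((R - Real.sqrt (R ^ 2 + 2 * R)) / 2) ^ n)

theorem sum_range_mul_of_linear_recurrence {α : Type*} [CommRing α] (x : ℕ → α) (p q : α)
    (h0 : x 0 = 0) (hrec : ∀ k, x (k + 2) = p * x (k + 1) - q * x k) (n : ℕ) :
    (∑ k ∈ Finset.range (n + 1), x k) * (1 - p + q) = x 1 - x (n + 1) + q * x n := by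
  induction n with
  | zero => simp [h0]
  | succ n ih =>
    rw [Finset.sum_range_succ, add_mul, ih, hrec]
    ring

theorem mul_pow_sub_pow_add_two {α : Type*} [CommRing α] (C L M : α) (k : ℕ) :
    C * (L ^ (k + 2) - M ^ (k + 2)) =
      (L + M) * (C * (L ^ (k + 1) - M ^ (k + 1))) - L * M * (C * (L ^ k - M ^ k)) := by
  ring

namespace PR

noncomputable abbrev W (R : ℝ) : ℝ := √(R ^ 2 + 2 * R)

noncomputable abbrev lam (R : ℝ) : ℝ := (R + W R) / 2

noncomputable abbrev mu (R : ℝ) : ℝ := (R - W R) / 2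

theorem eq_lam_pow_sub_mu_pow (R : ℝ) (n : ℕ) :
    PR R n = 2 / (R * W R) * (lam R ^ n - mu R ^ n) := rfl

variable {R : ℝ}

theorem W_sq (hR : 0 ≤ R) : W R ^ 2 = R ^ 2 + 2 * R :=
  Real.sq_sqrt (by positivity)

theorem lam_mul_mu (hR : 0 ≤ R) : lam R * mu R = -R / 2 := by
  linear_combination -W_sq hR / 4

theorem lam_pow_add_mu_pow (hR : 0 < R) (j : ℕ) :
    lam R ^ (j + 2) + mu R ^ (j + 2) =
      R * (R + 1) / 2 * PR R (j + 2) - R ^ 2 / 4 * PR R j := by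
  have hW : 0 < W R := Real.sqrt_pos.mpr (by positivity)
  -- `λ² = R (R + 1 + W) / 2`, `μ² = R (R + 1 − W) / 2` and `(R + 1)² − W² = 1`
  have hlam : lam R ^ 2 * (R + 1 - W R) = R / 2 := by
    linear_combination (1 - R - W R) / 4 * W_sq hR.le
  have hmu : mu R ^ 2 * (R + 1 + W R) = R / 2 := by
    linear_combination (1 - R + W R) / 4 * W_sq hR.le
  have key : W R * (lam R ^ (j + 2) + mu R ^ (j + 2)) =
      (R + 1) * (lam R ^ (j + 2) - mu R ^ (j + 2)) - R / 2 * (lam R ^ j - mu R ^ j) := by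
    linear_combination mu R ^ j * hmu - lam R ^ j * hlam
  rw [eq_lam_pow_sub_mu_pow, eq_lam_pow_sub_mu_pow]
  field_simp
  linear_combination 4 * key

end PR

/-- Closed form for the partial sums `∑_{k=0}^{n} P_R(km)`. -/
theorem PR_partial_sum (R : ℝ) (hR : 0 < R) (m : ℕ) (hm : 2 ≤ m)
    (a b c d : ℝ) (ha : a = 2 ^ m * PR R m) (hb : b = 2 ^ m)
    (hc : c = -(R * (R + 1) * 2 ^ (m - 1) * PR R m - R ^ 2 * 2 ^ (m - 2) * PR R (m - 2)))
    (hd : d = (-1 : ℝ) ^ m * R ^ m) (hden : b + c + d ≠ 0) (n : ℕ) :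
    ∑ k ∈ Finset.range (n + 1), PR R (k * m) =
      (a - b * PR R (m * (n + 1)) + d * PR R (m * n)) / (b + c + d) := by
  obtain ⟨j, rfl⟩ : ∃ j, m = j + 2 := ⟨m - 2, by omega⟩
  have hx (k : ℕ) : PR R ((j + 2) * k) =
      2 / (R * PR.W R) * ((PR.lam R ^ (j + 2)) ^ k - (PR.mu R ^ (j + 2)) ^ k) := by
    rw [PR.eq_lam_pow_sub_mu_pow, pow_mul, pow_mul]
  have hc' : c = -(b * (PR.lam R ^ (j + 2) + PR.mu R ^ (j + 2))) := by
    rw [hc, hb, PR.lam_pow_add_mu_pow hR, Nat.add_sub_cancel, show j + 2 - 1 = j + 1 by omega]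
    ring
  have hd' : d = b * (PR.lam R ^ (j + 2) * PR.mu R ^ (j + 2)) := by
    rw [hd, hb, ← mul_pow (PR.lam R), PR.lam_mul_mu hR.le, ← mul_pow, ← mul_pow]
    ring
  have hsum := sum_range_mul_of_linear_recurrence (fun k => PR R ((j + 2) * k))
    (PR.lam R ^ (j + 2) + PR.mu R ^ (j + 2)) (PR.lam R ^ (j + 2) * PR.mu R ^ (j + 2))
    (by simp [PR]) (fun k => by simp only [hx]; exact mul_pow_sub_pow_add_two _ _ _ k) n
  rw [eq_div_iff hden, hc', hd', ha, hb]
  simp only [mul_one, mul_comm _ (j + 2)] at hsum ⊢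
  linear_combination 2 ^ (j + 2) * hsum
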